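/- arXiv:1309.2002 — 2 statements merged into one kernel-verified Lean document; each statement's English description precedes it below -/
import Mathlib

section
/- Let M ≥ 1 and consider blocks Ā_{ij} ∈ ℝ^{n_i×n_j}, i,j ∈ {1,…,M}, and for each i a zonotope E_i = {x : H_i x ≤ 1} = {Ξ_i d : ‖d‖_∞ ≤ 1} ⊂ ℝ^{n_i} centered at the origin with H_i of full column rank and left inverse H_i^♭. Assume every Ā_{ii} is Schur and for every i, β_i := Σ_{j≠i} Σ_{k=0}^∞ ‖H_i Ā_{ii}^k Ā_{ij} H_j^♭‖_∞ < 1. Then for every i there exists a nonempty set S_i ⊆ E_i that is robust positively invariant (RPI) for the dynamics e_i⁺ = Ā_{ii} e_i + v_i with disturbance v_i ranging over the Minkowski sum V_i = ⊕_{j≠i} Ā_{ij} E_j, and moreover the product S = ∏_{i=1}^M S_i is positively invariant for the coupled dynamics e⁺ = Ā e, where Ā is the block matrix with blocks Ā_{ij}. -/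
/-!
The sets `S i` are the minimal RPI sets of the local dynamics: all finite sums
`∑_{k<K} Ā_{ii}^k v_k` with `v_k ∈ V i`. They contain `0` and are RPI by shifting the sum.
Every `v ∈ V i` is `∑_{j≠i} Ā_{ij} e_j` with `e_j = H_j^♭ H_j e_j` and `|H_j e_j| ≤ 1` (the
zonotopes are symmetric), so `|H_i Ā_{ii}^k v| ≤ ∑_{j≠i} ‖H_i Ā_{ii}^k Ā_{ij} H_j^♭‖_∞`
componentwise; summing over `k` gives `|H_i x| ≤ β_i < 1` on `S i`, hence `S i ⊆ E i`.
Product invariance is RPI with the disturbance `∑_{j≠i} Ā_{ij} e_j`, `e_j ∈ S j ⊆ E j`.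
-/

open scoped BigOperators
open Matrix

noncomputable section

/-- Induced infinity norm of a real matrix. -/
def matInfNorm {m n : Type*} [Fintype m] [Fintype n] (A : Matrix m n ℝ) : ℝ :=
  ⨆ i, ∑ j, |A i j|

/-- Infinity norm of a vector. -/
def vecInfNorm {m : Type*} [Fintype m] (v : m → ℝ) : ℝ := ⨆ i, |v i|

/-- A real square matrix is Schur if all of its complex eigenvalues lie strictly
inside the unit circle. -/
def IsSchur {ι : Type*} [Fintype ι] [DecidableEq ι] (A : Matrix ι ι ℝ) : Prop :=
  ∀ μ ∈ spectrum ℂ (A.map (algebraMap ℝ ℂ)), ‖μ‖ < 1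

section InfNorm

variable {m n p : Type*} [Fintype m] [Fintype n]

lemma sum_abs_le_matInfNorm (A : Matrix m n ℝ) (i : m) : ∑ j, |A i j| ≤ matInfNorm A :=
  le_ciSup (f := fun i => ∑ j, |A i j|) (Set.finite_range _).bddAbove i

lemma matInfNorm_nonneg (A : Matrix m n ℝ) : 0 ≤ matInfNorm A := by
  rcases isEmpty_or_nonempty m with hm | ⟨⟨i⟩⟩
  · simp [matInfNorm, iSup_of_empty']
  · exact (Finset.sum_nonneg fun _ _ => abs_nonneg _).trans (sum_abs_le_matInfNorm A i)

lemma abs_mulVec_le_matInfNorm (A : Matrix m n ℝ) {w : n → ℝ} (hw : ∀ j, |w j| ≤ 1) (i : m) :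
    |(A *ᵥ w) i| ≤ matInfNorm A :=
  calc |∑ j, A i j * w j| ≤ ∑ j, |A i j * w j| := Finset.abs_sum_le_sum_abs _ _
    _ ≤ ∑ j, |A i j| := Finset.sum_le_sum fun j _ => by
        rw [abs_mul]
        exact mul_le_of_le_one_right (abs_nonneg _) (hw j)
    _ ≤ matInfNorm A := sum_abs_le_matInfNorm A i

lemma abs_mulVec_le_matInfNorm_mul_of_leftInverse [Fintype p] [DecidableEq n] (C : Matrix m n ℝ)
    {H : Matrix p n ℝ} {Hflat : Matrix n p ℝ} (hleft : Hflat * H = 1) {x : n → ℝ}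
    (hx : ∀ s, |(H *ᵥ x) s| ≤ 1) (i : m) :
    |(C *ᵥ x) i| ≤ matInfNorm (C * Hflat) := by
  have hCx : C *ᵥ x = (C * Hflat) *ᵥ (H *ᵥ x) := by
    rw [mulVec_mulVec, Matrix.mul_assoc, hleft, Matrix.mul_one]
  rw [hCx]
  exact abs_mulVec_le_matInfNorm _ hx i

lemma vecInfNorm_neg (v : m → ℝ) : vecInfNorm (-v) = vecInfNorm v := by
  simp [vecInfNorm]

end InfNorm

lemma abs_mulVec_le_one_of_mem_zonotope {m τ p : Type*} [Fintype m] [Fintype p]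
    {E : Set (m → ℝ)} {H : Matrix τ m ℝ} {Ξ : Matrix m p ℝ}
    (hdual : E = {x | ∀ t, (H *ᵥ x) t ≤ 1})
    (hgen : E = {x | ∃ d : p → ℝ, vecInfNorm d ≤ 1 ∧ x = Ξ *ᵥ d})
    {x : m → ℝ} (hx : x ∈ E) (t : τ) : |(H *ᵥ x) t| ≤ 1 := by
  have hneg : -x ∈ E := by
    rw [hgen] at hx ⊢
    obtain ⟨d, hd, rfl⟩ := hx
    exact ⟨-d, by rwa [vecInfNorm_neg], by rw [mulVec_neg]⟩
  rw [hdual] at hx hneg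
  have h := hneg t
  rw [mulVec_neg, Pi.neg_apply] at h
  exact abs_le.2 ⟨by linarith, hx t⟩

section ReachableSet

variable {ι : Type*} [Fintype ι] [DecidableEq ι]

/-- The minimal RPI set `⋃_K ⊕_{k<K} A^k V` of `x⁺ = A x + v`, `v ∈ V`. -/
def reachableSet (A : Matrix ι ι ℝ) (V : Set (ι → ℝ)) : Set (ι → ℝ) :=
  {x | ∃ K, ∃ v : Fin K → ι → ℝ, (∀ k, v k ∈ V) ∧ x = ∑ k : Fin K, (A ^ (k : ℕ)) *ᵥ v k}

lemma zero_mem_reachableSet (A : Matrix ι ι ℝ) (V : Set (ι → ℝ)) : 0 ∈ reachableSet A V :=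
  ⟨0, Fin.elim0, fun k => k.elim0, by simp⟩

lemma mulVec_add_mem_reachableSet {A : Matrix ι ι ℝ} {V : Set (ι → ℝ)} {x v : ι → ℝ}
    (hx : x ∈ reachableSet A V) (hv : v ∈ V) : A *ᵥ x + v ∈ reachableSet A V := by
  obtain ⟨K, w, hw, rfl⟩ := hx
  refine ⟨K + 1, Fin.cons v w, Fin.cases hv hw, ?_⟩
  simp only [Fin.sum_univ_succ, Fin.cons_zero, Fin.cons_succ, Fin.val_zero, Fin.val_succ,
    pow_zero, one_mulVec, mulVec_sum, mulVec_mulVec, ← pow_succ']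
  exact add_comm _ _

lemma abs_mulVec_le_tsum_of_mem_reachableSet {τ : Type*} {A : Matrix ι ι ℝ} {H : Matrix τ ι ℝ}
    {V : Set (ι → ℝ)} {c : ℕ → ℝ} (hc : Summable c) (hc0 : ∀ k, 0 ≤ c k)
    (hV : ∀ v ∈ V, ∀ k t, |((H * A ^ k) *ᵥ v) t| ≤ c k)
    {x : ι → ℝ} (hx : x ∈ reachableSet A V) (t : τ) : |(H *ᵥ x) t| ≤ ∑' k, c k := by
  obtain ⟨K, v, hv, rfl⟩ := hx
  calc |(H *ᵥ ∑ k : Fin K, (A ^ (k : ℕ)) *ᵥ v k) t|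
        = |∑ k : Fin K, ((H * A ^ (k : ℕ)) *ᵥ v k) t| := by
          simp only [mulVec_sum, mulVec_mulVec, Finset.sum_apply]
    _ ≤ ∑ k : Fin K, |((H * A ^ (k : ℕ)) *ᵥ v k) t| := Finset.abs_sum_le_sum_abs _ _
    _ ≤ ∑ k : Fin K, c k := Finset.sum_le_sum fun k _ => hV _ (hv k) k t
    _ = ∑ k ∈ Finset.range K, c k := Fin.sum_univ_eq_sum_range c K
    _ ≤ ∑' k, c k := hc.sum_le_tsum _ fun k _ => hc0 k

end ReachableSet

theorem prop1_part_II_general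
    (M : ℕ)
    (n τ nb : Fin M → ℕ)
    (A : ∀ i j : Fin M, Matrix (Fin (n i)) (Fin (n j)) ℝ)
    (H : ∀ i, Matrix (Fin (τ i)) (Fin (n i)) ℝ)
    (Hflat : ∀ i, Matrix (Fin (n i)) (Fin (τ i)) ℝ)
    (Ξ : ∀ i, Matrix (Fin (n i)) (Fin (nb i)) ℝ)
    (E : ∀ i, Set (Fin (n i) → ℝ))
    (hleft : ∀ i, Hflat i * H i = 1)
    (hEdual : ∀ i, E i = {x | ∀ t, (H i).mulVec x t ≤ 1})
    (hEgen : ∀ i, E i = {x | ∃ d : Fin (nb i) → ℝ, vecInfNorm d ≤ 1 ∧ x = (Ξ i).mulVec d})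
    (hSummable : ∀ i j, j ≠ i →
      Summable (fun k : ℕ => matInfNorm (H i * (A i i) ^ k * A i j * Hflat j)))
    (hbeta : ∀ i,
      ∑ j ∈ Finset.univ.erase i, ∑' k : ℕ,
        matInfNorm (H i * (A i i) ^ k * A i j * Hflat j) < 1) :
    ∃ S : ∀ i, Set (Fin (n i) → ℝ),
      (∀ i, (S i).Nonempty) ∧
      (∀ i, S i ⊆ E i) ∧
      -- `S i` is RPI for `e⁺ = Ā_{ii} e + v`, `v ∈ V i = ⊕_{j ≠ i} Ā_{ij} E j`
      (∀ i, ∀ x ∈ S i,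
        ∀ v ∈ {v : Fin (n i) → ℝ | ∃ e : ∀ j, Fin (n j) → ℝ,
            (∀ j ∈ Finset.univ.erase i, e j ∈ E j) ∧
            v = ∑ j ∈ Finset.univ.erase i, (A i j).mulVec (e j)},
          (A i i).mulVec x + v ∈ S i) ∧
      -- the product `S = ∏ i, S i` is positively invariant for `e⁺ = Ā e`
      (∀ e : ∀ j, Fin (n j) → ℝ, (∀ j, e j ∈ S j) →
        ∀ i, (A i i).mulVec (e i) + ∑ j ∈ Finset.univ.erase i, (A i j).mulVec (e j) ∈ S i) := by
  set V : ∀ i, Set (Fin (n i) → ℝ) := fun i =>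
    {v | ∃ e : ∀ j, Fin (n j) → ℝ, (∀ j ∈ Finset.univ.erase i, e j ∈ E j) ∧
      v = ∑ j ∈ Finset.univ.erase i, (A i j) *ᵥ (e j)}
  set gain : ∀ i j, ℕ → ℝ := fun i j k => matInfNorm (H i * (A i i) ^ k * A i j * Hflat j)
  have hgain : ∀ i, ∀ v ∈ V i, ∀ k t,
      |((H i * A i i ^ k) *ᵥ v) t| ≤ ∑ j ∈ Finset.univ.erase i, gain i j k := by
    rintro i _ ⟨e, he, rfl⟩ k t
    simp only [mulVec_sum, mulVec_mulVec, Finset.sum_apply]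
    refine (Finset.abs_sum_le_sum_abs _ _).trans (Finset.sum_le_sum fun j hj => ?_)
    exact abs_mulVec_le_matInfNorm_mul_of_leftInverse _ (hleft j)
      (abs_mulVec_le_one_of_mem_zonotope (hEdual j) (hEgen j) (he j hj)) t
  have hsub : ∀ i, reachableSet (A i i) (V i) ⊆ E i := by
    intro i x hx
    have hsum : ∀ j ∈ Finset.univ.erase i, Summable (gain i j) :=
      fun j hj => hSummable i j (Finset.ne_of_mem_erase hj)
    rw [hEdual i]
    intro t
    have hbound := abs_mulVec_le_tsum_of_mem_reachableSet (summable_sum hsum)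
      (fun k => Finset.sum_nonneg fun j _ => matInfNorm_nonneg _) (hgain i) hx t
    rw [Summable.tsum_finsetSum hsum] at hbound
    linarith [le_abs_self ((H i *ᵥ x) t), hbeta i]
  refine ⟨fun i => reachableSet (A i i) (V i), fun i => ⟨0, zero_mem_reachableSet _ _⟩, hsub,
    fun i x hx v hv => mulVec_add_mem_reachableSet hx hv, fun e he i => ?_⟩
  exact mulVec_add_mem_reachableSet (he i) ⟨e, fun j _ => hsub j (he j), rfl⟩

/-- Proposition 1, part (II): under the small-gain conditions there exist nonempty
RPI sets `S i ⊆ E i` for the local error dynamics (with coupling treated as a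
disturbance ranging over the Minkowski sum `V i = ⊕_{j≠i} Ā_{ij} E j`), whose
product is positively invariant for the coupled dynamics `e⁺ = Ā e`. -/
theorem prop1_part_II
    (M : ℕ) (hM : 1 ≤ M)
    (n τ nb : Fin M → ℕ)
    (A : ∀ i j : Fin M, Matrix (Fin (n i)) (Fin (n j)) ℝ)
    (H : ∀ i, Matrix (Fin (τ i)) (Fin (n i)) ℝ)
    (Hflat : ∀ i, Matrix (Fin (n i)) (Fin (τ i)) ℝ)
    (Ξ : ∀ i, Matrix (Fin (n i)) (Fin (nb i)) ℝ)
    (E : ∀ i, Set (Fin (n i) → ℝ))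
    (hrank : ∀ i, (H i).rank = n i)
    (hleft : ∀ i, Hflat i * H i = 1)
    (hEdual : ∀ i, E i = {x | ∀ t, (H i).mulVec x t ≤ 1})
    (hEgen : ∀ i, E i = {x | ∃ d : Fin (nb i) → ℝ, vecInfNorm d ≤ 1 ∧ x = (Ξ i).mulVec d})
    (hSchur : ∀ i, IsSchur (A i i))
    (hSummable : ∀ i j, j ≠ i →
      Summable (fun k : ℕ => matInfNorm (H i * (A i i) ^ k * A i j * Hflat j)))
    (hbeta : ∀ i,
      ∑ j ∈ Finset.univ.erase i, ∑' k : ℕ,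
        matInfNorm (H i * (A i i) ^ k * A i j * Hflat j) < 1) :
    ∃ S : ∀ i, Set (Fin (n i) → ℝ),
      (∀ i, (S i).Nonempty) ∧
      (∀ i, S i ⊆ E i) ∧
      -- `S i` is RPI for `e⁺ = Ā_{ii} e + v`, `v ∈ V i = ⊕_{j ≠ i} Ā_{ij} E j`
      (∀ i, ∀ x ∈ S i,
        ∀ v ∈ {v : Fin (n i) → ℝ | ∃ e : ∀ j, Fin (n j) → ℝ,
            (∀ j ∈ Finset.univ.erase i, e j ∈ E j) ∧
            v = ∑ j ∈ Finset.univ.erase i, (A i j).mulVec (e j)},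
          (A i i).mulVec x + v ∈ S i) ∧
      -- the product `S = ∏ i, S i` is positively invariant for `e⁺ = Ā e`
      (∀ e : ∀ j, Fin (n j) → ℝ, (∀ j, e j ∈ S j) →
        ∀ i, (A i i).mulVec (e i) + ∑ j ∈ Finset.univ.erase i, (A i j).mulVec (e j) ∈ S i) :=
  prop1_part_II_general M n τ nb A H Hflat Ξ E hleft hEdual hEgen hSummable hbeta
end
end

section
/- Let A ∈ ℝ^{n×n} have spectral radius strictly less than 1, let Ψ ∈ ℝ^{n×q}, and let S = { Σ_{k=0}^∞ A^k Ψ d_k : d_k ∈ ℝ^q, ‖d_k‖_∞ ≤ 1 for all k }. Let H ∈ ℝ^{τ̄×n} have rows h_1ᵀ,…,h_{τ̄}ᵀ. If for every row index τ the (convergent) series Σ_{k=0}^∞ ‖Ψᵀ (Aᵀ)^k h_τ‖_1 is at most 1, then S ⊆ {x ∈ ℝ^n : H x ≤ 1 componentwise}. Moreover, sup_{x ∈ S} h_τᵀ x = Σ_{k=0}^∞ ‖Ψᵀ (Aᵀ)^k h_τ‖_1 for each τ. -/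
open scoped BigOperators
open Matrix

noncomputable section

open Filter
open scoped NNReal ENNReal

/-!
For `x = ∑ₖ Aᵏ Ψ dₖ ∈ S` and a row `h`, put `wₖ = (Aᵏ Ψ)ᵀ h`. Then `h ⬝ x = ∑ₖ wₖ ⬝ dₖ`, and
Hölder's inequality with `‖dₖ‖∞ ≤ 1` bounds each term by `‖wₖ‖₁`; the disturbance
`dₖ = sign wₖ` attains every bound at once, so the series is the support function of `S`.
All series converge absolutely because `∑ₖ ‖Aᵏ‖ < ∞`: by Gelfand's formula `‖Aᵏ‖ ≤ rᵏ`
eventually, for any `r` strictly between the spectral radius and `1`.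
-/

theorem summable_norm_pow_of_spectralRadius_lt_one {𝔸 : Type*} [NormedRing 𝔸]
    [NormedAlgebra ℂ 𝔸] [CompleteSpace 𝔸] {a : 𝔸} (ha : spectralRadius ℂ a < 1) :
    Summable fun k => ‖a ^ k‖ := by
  obtain ⟨r, hρr, hr1⟩ := ENNReal.lt_iff_exists_nnreal_btwn.mp ha
  have hroot : ∀ᶠ k : ℕ in atTop, (‖a ^ k‖₊ : ℝ≥0∞) ^ (1 / k : ℝ) < r :=
    eventually_lt_of_limsup_lt
      ((spectrum.limsup_pow_nnnorm_pow_one_div_le_spectralRadius a).trans_lt hρr)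
  refine .of_norm_bounded_eventually_nat
    (summable_geometric_of_lt_one r.2 (by exact_mod_cast hr1)) ?_
  filter_upwards [hroot, eventually_gt_atTop 0] with k hk hk0
  rw [one_div, ENNReal.rpow_inv_lt_iff (by positivity), ENNReal.rpow_natCast] at hk
  rw [norm_norm]
  exact_mod_cast hk.le

theorem vecInfNorm_eq_norm {m : Type*} [Fintype m] (v : m → ℝ) : vecInfNorm v = ‖v‖ := by
  have hbdd : BddAbove (Set.range fun i => |v i|) := (Set.finite_range _).bddAbove
  refine le_antisymm (Real.iSup_le (fun i => ?_) (norm_nonneg v)) ?_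
  · exact (Real.norm_eq_abs (v i)).symm.trans_le (norm_le_pi_norm v i)
  · exact (pi_norm_le_iff_of_nonneg (Real.iSup_nonneg fun i => abs_nonneg _)).mpr
      fun i => le_ciSup hbdd i

theorem HasSum.dotProduct_left {ι m R : Type*} [Fintype m] [NonUnitalNonAssocSemiring R]
    [TopologicalSpace R] [IsTopologicalSemiring R] {f : ι → m → R} {x : m → R}
    (hf : HasSum f x) (v : m → R) : HasSum (fun k => v ⬝ᵥ f k) (v ⬝ᵥ x) :=
  hasSum_sum fun r _ => (Pi.hasSum.mp hf r).mul_left (v r)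

section Holder
variable {p : Type*} [Fintype p]

theorem dotProduct_le_sum_abs (w : p → ℝ) {d : p → ℝ} (hd : ‖d‖ ≤ 1) :
    w ⬝ᵥ d ≤ ∑ c, |w c| :=
  Finset.sum_le_sum fun c _ => (le_abs_self _).trans <| by
    rw [abs_mul, ← Real.norm_eq_abs (d c)]
    exact mul_le_of_le_one_right (abs_nonneg _) ((norm_le_pi_norm d c).trans hd)

theorem norm_sign_comp_le_one (w : p → ℝ) : ‖fun c => (SignType.sign (w c) : ℝ)‖ ≤ 1 :=
  (pi_norm_le_iff_of_nonneg zero_le_one).mpr fun c => by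
    rcases SignType.sign (w c) with _ | _ | _ <;> simp

theorem dotProduct_sign_comp (w : p → ℝ) :
    w ⬝ᵥ (fun c => (SignType.sign (w c) : ℝ)) = ∑ c, |w c| :=
  Finset.sum_congr rfl fun c _ => self_mul_sign (w c)

end Holder

section LinftyNorm

attribute [local instance] Matrix.linftyOpNormedAddCommGroup Matrix.linftyOpNormedRing
  Matrix.linftyOpNormedAlgebra

section BoundedSeries

variable {m p : Type*} [Fintype m] [Fintype p] (M : ℕ → Matrix m p ℝ)

def boundedSeriesSet : Set (m → ℝ) :=
  {x | ∃ d : ℕ → p → ℝ, (∀ k, ‖d k‖ ≤ 1) ∧ HasSum (fun k => M k *ᵥ d k) x}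

variable {M}

theorem summable_mulVec_of_norm_le_one (hM : Summable fun k => ‖M k‖) {d : ℕ → p → ℝ}
    (hd : ∀ k, ‖d k‖ ≤ 1) : Summable fun k => M k *ᵥ d k :=
  hM.of_norm_bounded fun k =>
    (linfty_opNorm_mulVec _ _).trans (mul_le_of_le_one_right (norm_nonneg _) (hd k))

theorem exists_mem_boundedSeriesSet_hasSum_sum_abs_vecMul (hM : Summable fun k => ‖M k‖)
    (h : m → ℝ) :
    ∃ x ∈ boundedSeriesSet M, HasSum (fun k => ∑ c, |(h ᵥ* M k) c|) (h ⬝ᵥ x) := by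
  set d : ℕ → p → ℝ := fun k c => SignType.sign ((h ᵥ* M k) c)
  have hd : ∀ k, ‖d k‖ ≤ 1 := fun k => norm_sign_comp_le_one _
  obtain ⟨x, hx⟩ := summable_mulVec_of_norm_le_one hM hd
  refine ⟨x, ⟨d, hd, hx⟩, ?_⟩
  simpa only [d, dotProduct_mulVec, dotProduct_sign_comp] using hx.dotProduct_left h

theorem isGreatest_dotProduct_boundedSeriesSet (hM : Summable fun k => ‖M k‖) (h : m → ℝ) :
    IsGreatest ((h ⬝ᵥ ·) '' boundedSeriesSet M) (∑' k, ∑ c, |(h ᵥ* M k) c|) := by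
  obtain ⟨x, hx, hsum⟩ := exists_mem_boundedSeriesSet_hasSum_sum_abs_vecMul hM h
  refine ⟨⟨x, hx, hsum.tsum_eq.symm⟩, ?_⟩
  rintro _ ⟨y, ⟨d, hd, hy⟩, rfl⟩
  refine hasSum_le (fun k => ?_) (hy.dotProduct_left h) hsum.summable.hasSum
  rw [dotProduct_mulVec]
  exact dotProduct_le_sum_abs _ (hd k)

end BoundedSeries

theorem IsSchur.spectralRadius_lt_one {ι : Type*} [Fintype ι] [DecidableEq ι]
    {A : Matrix ι ι ℝ} (hA : IsSchur A) :
    spectralRadius ℂ (A.map (algebraMap ℝ ℂ)) < 1 := by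
  rcases (spectrum ℂ (A.map (algebraMap ℝ ℂ))).eq_empty_or_nonempty with h | h
  · rw [spectralRadius, h]
    simp
  · exact_mod_cast spectrum.spectralRadius_lt_of_forall_lt_of_nonempty h
      (r := 1) fun z hz => by exact_mod_cast hA z hz

theorem IsSchur.summable_norm_pow {ι : Type*} [Fintype ι] [DecidableEq ι]
    {A : Matrix ι ι ℝ} (hA : IsSchur A) : Summable fun k => ‖A ^ k‖ := by
  have hmap : ∀ k, ‖(A.map (algebraMap ℝ ℂ)) ^ k‖ = ‖A ^ k‖ := fun k => by
    rw [← Matrix.map_pow]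
    simp [Matrix.linfty_opNorm_def]
  exact (summable_norm_pow_of_spectralRadius_lt_one hA.spectralRadius_lt_one).congr hmap

theorem IsSchur.summable_norm_pow_mul {ι p : Type*} [Fintype ι] [DecidableEq ι] [Fintype p]
    {A : Matrix ι ι ℝ} (hA : IsSchur A) (Ψ : Matrix ι p ℝ) :
    Summable fun k => ‖A ^ k * Ψ‖ :=
  (hA.summable_norm_pow.mul_right ‖Ψ‖).of_nonneg_of_le (fun _ => norm_nonneg _)
    fun _ => linfty_opNorm_mul _ _

end LinftyNorm

/-- Containment criterion for the minimal RPI set: if for every row `τ` of `H` the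
series `Σ_k ‖Ψᵀ (Aᵀ)^k h_τ‖₁` is at most 1, then
`S = ⊕_{k=0}^∞ A^k Ψ {‖d‖_∞ ≤ 1} ⊆ {x : H x ≤ 1}`; moreover the support function of
`S` in the direction of each row `h_τ` equals that series. -/
theorem mRPI_containment
    (n q tb : ℕ)
    (A : Matrix (Fin n) (Fin n) ℝ)
    (Ψ : Matrix (Fin n) (Fin q) ℝ)
    (hA : IsSchur A)
    (S : Set (Fin n → ℝ))
    (hS : S = {x | ∃ d : ℕ → (Fin q → ℝ), (∀ k, vecInfNorm (d k) ≤ 1) ∧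
        HasSum (fun k : ℕ => (A ^ k * Ψ).mulVec (d k)) x})
    (H : Matrix (Fin tb) (Fin n) ℝ)
    (hrows : ∀ t : Fin tb,
      ∑' k : ℕ, ∑ c, |(Ψ.transpose * A.transpose ^ k).mulVec (fun r => H t r) c| ≤ 1) :
    S ⊆ {x | ∀ t, H.mulVec x t ≤ 1} ∧
    ∀ t : Fin tb,
      sSup {y : ℝ | ∃ x ∈ S, y = (fun r => H t r) ⬝ᵥ x}
        = ∑' k : ℕ, ∑ c, |(Ψ.transpose * A.transpose ^ k).mulVec (fun r => H t r) c| := by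
  have hS' : S = boundedSeriesSet fun k => A ^ k * Ψ := by
    simp only [hS, vecInfNorm_eq_norm]; rfl
  have hrow (t : Fin tb) (k : ℕ) :
      (Ψᵀ * Aᵀ ^ k) *ᵥ (fun r => H t r) = H t ᵥ* (A ^ k * Ψ) := by
    rw [← transpose_pow, ← transpose_mul, mulVec_transpose]
  have hmax (t : Fin tb) := isGreatest_dotProduct_boundedSeriesSet
    (hA.summable_norm_pow_mul Ψ) (H t)
  simp only [hrow, ← hS'] at hrows hmax ⊢
  refine ⟨fun x hx t => ((hmax t).2 ⟨x, hx, rfl⟩).trans (hrows t), fun t => ?_⟩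
  rw [← (hmax t).csSup_eq]
  congr 1
  ext y
  simp [eq_comm]
end
end
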